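/- arXiv:2203.12912 — 2 statements merged into one kernel-verified Lean document; each statement's English description precedes it below -/
import Mathlib

section
/- Let n, k, δ, γ be positive integers with γ ≥ 2·log₂ n, and let G be a simple graph on a vertex set V of n nodes that is (k/64)-expanding, (k/64, δ/8, δ/4)-edge-dense, and (k, 3/4, δ)-compact. Then for every set B ⊆ V with |B| ≥ k and every survival set C for B (i.e., C ⊆ B with |C| ≥ (3/4)·k such that every node of C has at least δ neighbors inside C), any two nodes v, w ∈ C are at distance at most 2γ + 1 in the induced subgraph G|_C. -/
open Real

namespace Paper

variable {V : Type*}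

/-- The set of edges of `G` internal for a vertex set `X`. -/
def internalEdges (G : SimpleGraph V) (X : Set V) : Set (Sym2 V) :=
  {e | e ∈ G.edgeSet ∧ ∀ v ∈ e, v ∈ X}

/-- `G` is `(ℓ, α, β)`-edge-dense. -/
def EdgeDense (G : SimpleGraph V) (ℓ α β : ℝ) : Prop :=
  (∀ X : Set V, ℓ ≤ (X.ncard : ℝ) → α * X.ncard ≤ ((internalEdges G X).ncard : ℝ)) ∧
  (∀ Y : Set V, (Y.ncard : ℝ) ≤ ℓ → ((internalEdges G Y).ncard : ℝ) ≤ β * Y.ncard)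

/-- `G` is `ℓ`-expanding: any two disjoint sets of at least `ℓ` vertices each
are connected by an edge. -/
def Expanding (G : SimpleGraph V) (ℓ : ℝ) : Prop :=
  ∀ A B : Set V, Disjoint A B → ℓ ≤ (A.ncard : ℝ) → ℓ ≤ (B.ncard : ℝ) →
    ∃ a ∈ A, ∃ b ∈ B, G.Adj a b

/-- `G` is `(ℓ, ε, δ)`-compact. -/
def Compact (G : SimpleGraph V) (ℓ ε δ : ℝ) : Prop :=
  ∀ B : Set V, ℓ ≤ (B.ncard : ℝ) →
    ∃ C ⊆ B, ε * ℓ ≤ (C.ncard : ℝ) ∧ ∀ v ∈ C, δ ≤ ((C ∩ G.neighborSet v).ncard : ℝ)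

open scoped Classical in
lemma internalEdges_eq (G : SimpleGraph V) (X : Set V) :
    internalEdges G X = Sym2.map (Subtype.val : X → V) '' (G.induce X).edgeSet := by
  ext e
  induction e using Sym2.ind with
  | _ x y =>
    constructor
    · rintro ⟨he, hmem⟩
      rw [SimpleGraph.mem_edgeSet] at he
      have hx : x ∈ X := hmem x (by simp)
      have hy : y ∈ X := hmem y (by simp)
      exact ⟨s(⟨x, hx⟩, ⟨y, hy⟩), by simpa using he, by simp⟩
    · rintro ⟨e', he', heq⟩
      induction e' using Sym2.ind with
      | _ a b =>
        simp only [Sym2.map_pair_eq, Sym2.eq_iff] at heq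
        have hab : G.Adj a.val b.val := by simpa using he'
        rcases heq with ⟨hx, hy⟩ | ⟨hx, hy⟩
        · subst hx; subst hy
          exact ⟨hab, by rintro v hv; rcases Sym2.mem_iff.mp hv with rfl | rfl <;> simp⟩
        · subst hx; subst hy
          exact ⟨hab.symm, by rintro v hv; rcases Sym2.mem_iff.mp hv with rfl | rfl <;> simp⟩

open scoped Classical in
lemma handshake [Fintype V] (G : SimpleGraph V) (X : Set V) :
    2 * (internalEdges G X).ncard = ∑ u ∈ X.toFinset, (X ∩ G.neighborSet u).ncard := by
  have h1 : (internalEdges G X).ncard = (G.induce X).edgeSet.ncard := by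
    rw [internalEdges_eq, Set.ncard_image_of_injective _ (Sym2.map.injective Subtype.val_injective)]
  have h2 : (G.induce X).edgeSet.ncard = (G.induce X).edgeFinset.card := by
    rw [← SimpleGraph.coe_edgeFinset, Set.ncard_coe_finset]
  have h3 : ∀ u : X, (G.induce X).degree u = (X ∩ G.neighborSet u.val).ncard := by
    intro u
    have himg : Subtype.val '' ((G.induce X).neighborSet u) = X ∩ G.neighborSet u.val := by
      ext y
      simp only [Set.mem_image, SimpleGraph.mem_neighborSet, Set.mem_inter_iff]
      constructor
      · rintro ⟨w, hw, rfl⟩; exact ⟨w.2, by simpa using hw⟩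
      · rintro ⟨hy, hadj⟩; exact ⟨⟨y, hy⟩, by simpa using hadj, rfl⟩
    rw [← himg, Set.ncard_image_of_injective _ Subtype.val_injective,
      ← SimpleGraph.card_neighborSet_eq_degree, Set.ncard_eq_toFinset_card']
    exact (Set.toFinset_card _).symm
  have h4 := SimpleGraph.sum_degrees_eq_twice_card_edges (G.induce X)
  have h5 : ∑ u ∈ X.toFinset, (X ∩ G.neighborSet u).ncard
      = ∑ u : X, (G.induce X).degree u := by
    rw [← Finset.sum_coe_sort X.toFinset (fun u => (X ∩ G.neighborSet u).ncard)]
    refine Fintype.sum_equiv (Equiv.subtypeEquivRight (fun x => Set.mem_toFinset)) _ _ (fun x => ?_)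
    simp [h3]
  rw [h5, h4, h1, h2]

def ball {α : Type*} (H : SimpleGraph α) (a : α) (i : ℕ) : Set α :=
  {b | ∃ p : H.Walk a b, p.length ≤ i}

lemma self_mem_ball {α : Type*} (H : SimpleGraph α) (a : α) (i : ℕ) : a ∈ ball H a i :=
  ⟨SimpleGraph.Walk.nil, by simp⟩

lemma ball_mono {α : Type*} (H : SimpleGraph α) (a : α) (i : ℕ) :
    ball H a i ⊆ ball H a (i + 1) := by
  rintro b ⟨p, hp⟩; exact ⟨p, hp.trans (Nat.le_succ i)⟩

lemma adj_mem_ball {α : Type*} {H : SimpleGraph α} {a b c : α} {i : ℕ}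
    (hb : b ∈ ball H a i) (h : H.Adj b c) : c ∈ ball H a (i + 1) := by
  obtain ⟨p, hp⟩ := hb
  exact ⟨p.concat h, by rw [SimpleGraph.Walk.length_concat]; omega⟩

lemma ball_zero {α : Type*} (H : SimpleGraph α) (a : α) : ball H a 0 = {a} := by
  ext b
  constructor
  · rintro ⟨p, hp⟩
    exact Set.mem_singleton_iff.mpr (SimpleGraph.Walk.eq_of_length_eq_zero (Nat.le_zero.mp hp)).symm
  · rintro rfl; exact self_mem_ball _ _ 0

lemma growth [Fintype V] (G : SimpleGraph V) {δ : ℕ} {ℓ : ℝ} (hδ : 0 < δ)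
    (hupper : ∀ Y : Set V, (Y.ncard : ℝ) ≤ ℓ → ((internalEdges G Y).ncard : ℝ) ≤ ((δ : ℝ)/4) * Y.ncard)
    {C S T : Set V} (hST : S ⊆ T)
    (hdeg : ∀ u ∈ C, (δ : ℝ) ≤ ((C ∩ G.neighborSet u).ncard : ℝ))
    (hSC : S ⊆ C)
    (hnbr : ∀ u ∈ S, C ∩ G.neighborSet u ⊆ T)
    (hTsmall : ((T.ncard : ℝ)) ≤ ℓ) :
    2 * (S.ncard : ℝ) ≤ (T.ncard : ℝ) := by
  classical
  have key : δ * S.ncard ≤ 2 * (internalEdges G T).ncard := by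
    rw [handshake G T]
    calc δ * S.ncard = ∑ _u ∈ S.toFinset, δ := by
          rw [Finset.sum_const, Set.ncard_eq_toFinset_card', smul_eq_mul, mul_comm]
      _ ≤ ∑ u ∈ S.toFinset, (T ∩ G.neighborSet u).ncard := by
          refine Finset.sum_le_sum (fun u hu => ?_)
          rw [Set.mem_toFinset] at hu
          have h1 : (δ : ℝ) ≤ ((C ∩ G.neighborSet u).ncard : ℝ) := hdeg u (hSC hu)
          have h2 : (C ∩ G.neighborSet u).ncard ≤ (T ∩ G.neighborSet u).ncard := by
            refine Set.ncard_le_ncard ?_ (Set.toFinite _)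
            exact fun y hy => ⟨hnbr u hu hy, hy.2⟩
          have h1' : δ ≤ (C ∩ G.neighborSet u).ncard := by exact_mod_cast h1
          exact le_trans h1' h2
      _ ≤ ∑ u ∈ T.toFinset, (T ∩ G.neighborSet u).ncard := by
          refine Finset.sum_le_sum_of_subset ?_
          exact Set.toFinset_subset_toFinset.mpr hST
  have key' : (δ : ℝ) * S.ncard ≤ 2 * ((δ : ℝ)/4 * T.ncard) := by
    have := hupper T hTsmall
    calc (δ : ℝ) * S.ncard ≤ 2 * ((internalEdges G T).ncard : ℝ) := by exact_mod_cast key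
      _ ≤ 2 * ((δ : ℝ)/4 * T.ncard) := by linarith
  have hδ' : (0 : ℝ) < δ := by exact_mod_cast hδ
  nlinarith [key']

theorem stmt1 {V : Type*} [Fintype V] (n k δ γ : ℕ)
    (hn : 0 < n) (hk : 0 < k) (hδ : 0 < δ) (hγ : 0 < γ)
    (hV : Fintype.card V = n)
    (hγlog : 2 * Real.logb 2 n ≤ (γ : ℝ))
    (G : SimpleGraph V)
    (hexp : Expanding G ((k : ℝ) / 64))
    (hdense : EdgeDense G ((k : ℝ) / 64) ((δ : ℝ) / 8) ((δ : ℝ) / 4))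
    (hcomp : Compact G (k : ℝ) (3 / 4) (δ : ℝ))
    (B : Set V) (hB : (k : ℝ) ≤ (B.ncard : ℝ))
    (C : Set V) (hCB : C ⊆ B) (hCcard : (3 / 4 : ℝ) * k ≤ (C.ncard : ℝ))
    (hCdeg : ∀ v ∈ C, (δ : ℝ) ≤ ((C ∩ G.neighborSet v).ncard : ℝ))
    (v w : V) (hv : v ∈ C) (hw : w ∈ C) :
    ∃ p : (G.induce C).Walk ⟨v, hv⟩ ⟨w, hw⟩, p.length ≤ 2 * γ + 1 := by
  classical
  set H := G.induce C with hH
  -- basic numeric facts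
  have hkn : (k : ℝ) ≤ n := by
    refine hB.trans ?_
    have : B.ncard ≤ n := by
      rw [← hV, ← Nat.card_eq_fintype_card, ← Set.ncard_univ V]
      exact Set.ncard_le_ncard (Set.subset_univ B) Set.finite_univ
    exact_mod_cast this
  have h2γ : (n : ℝ) ≤ 2 ^ γ := by
    have hn1 : (1 : ℝ) ≤ n := by exact_mod_cast hn
    have h0 : 0 ≤ Real.logb 2 n := Real.logb_nonneg (by norm_num) hn1
    have hlog : Real.logb 2 n ≤ (γ : ℝ) := by linarith
    calc (n : ℝ) = (2 : ℝ) ^ (Real.logb 2 n) :=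
          (Real.rpow_logb (by norm_num) (by norm_num) (by linarith)).symm
      _ ≤ (2 : ℝ) ^ ((γ : ℕ) : ℝ) := Real.rpow_le_rpow_of_exponent_le (by norm_num) hlog
      _ = 2 ^ γ := Real.rpow_natCast 2 γ
  -- the ball-growth argument, for an arbitrary base vertex
  have main : ∀ u0 : ↥C, (k : ℝ) / 64 ≤ (((Subtype.val '' ball H u0 γ).ncard : ℝ)) := by
    intro u0
    set X : ℕ → Set V := fun i => Subtype.val '' ball H u0 i with hX
    have hXC : ∀ i, X i ⊆ C := by rintro i _ ⟨b, _, rfl⟩; exact b.2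
    have hXmono : ∀ i, X i ⊆ X (i + 1) := fun i => Set.image_mono (ball_mono H u0 i)
    have hXnbr : ∀ i, ∀ u ∈ X i, C ∩ G.neighborSet u ⊆ X (i + 1) := by
      rintro i u ⟨b, hb, rfl⟩ y ⟨hyC, hyadj⟩
      refine ⟨⟨y, hyC⟩, adj_mem_ball hb ?_, rfl⟩
      exact hyadj
    have hX0 : ((X 0).ncard : ℝ) = 1 := by
      rw [hX]
      simp [ball_zero]
    have hgrow : ∀ i, ((2 : ℝ) ^ i ≤ ((X i).ncard : ℝ)) ∨ ((k : ℝ) / 64 ≤ ((X i).ncard : ℝ)) := by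
      intro i
      induction i with
      | zero => left; rw [hX0]; norm_num
      | succ i ih =>
        by_cases hc : (((X (i + 1)).ncard : ℝ)) ≤ (k : ℝ) / 64
        · rcases ih with h | h
          · left
            have hg : 2 * ((X i).ncard : ℝ) ≤ ((X (i + 1)).ncard : ℝ) :=
              growth G hδ hdense.2 (hXmono i) hCdeg (hXC i) (hXnbr i) hc
            calc (2 : ℝ) ^ (i + 1) = 2 * 2 ^ i := by ring
              _ ≤ 2 * ((X i).ncard : ℝ) := by linarith
              _ ≤ ((X (i + 1)).ncard : ℝ) := hg
          · right
            refine h.trans ?_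
            exact_mod_cast Set.ncard_le_ncard (hXmono i) (Set.toFinite _)
        · right; linarith
    rcases hgrow γ with h | h
    · have hXn : ((X γ).ncard : ℝ) ≤ n := by
        have : (X γ).ncard ≤ n := by
          rw [← hV, ← Nat.card_eq_fintype_card, ← Set.ncard_univ V]
          exact Set.ncard_le_ncard (Set.subset_univ _) Set.finite_univ
        exact_mod_cast this
      have hk0 : (0 : ℝ) ≤ k := by positivity
      nlinarith [h2γ, hkn, h, hXn]
    · exact h
  -- assemble the walk
  set v0 : ↥C := ⟨v, hv⟩
  set w0 : ↥C := ⟨w, hw⟩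
  by_cases hdisj : Disjoint (Subtype.val '' ball H v0 γ) (Subtype.val '' ball H w0 γ)
  · obtain ⟨a, ha, b, hb, hab⟩ := hexp _ _ hdisj (main v0) (main w0)
    obtain ⟨a', ha', rfl⟩ := ha
    obtain ⟨b', hb', rfl⟩ := hb
    obtain ⟨p, hp⟩ := ha'
    obtain ⟨q, hq⟩ := hb'
    have hadj : H.Adj a' b' := hab
    refine ⟨p.append (SimpleGraph.Walk.cons hadj q.reverse), ?_⟩
    rw [SimpleGraph.Walk.length_append, SimpleGraph.Walk.length_cons,
      SimpleGraph.Walk.length_reverse]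
    omega
  · obtain ⟨x, hx1, hx2⟩ := Set.not_disjoint_iff.mp hdisj
    obtain ⟨b1, hb1, rfl⟩ := hx1
    obtain ⟨b2, hb2, hb12⟩ := hx2
    have hbeq : b2 = b1 := Subtype.ext hb12
    subst hbeq
    obtain ⟨p, hp⟩ := hb1
    obtain ⟨q, hq⟩ := hb2
    refine ⟨p.append q.reverse, ?_⟩
    rw [SimpleGraph.Walk.length_append, SimpleGraph.Walk.length_reverse]
    omega


end Paper
end

section
/- Set δ = 24·log₂ n. There is a constant c > 0 such that for all sufficiently large n and every integer k with 25δ ≤ k ≤ 2n/3, the Erdős–Rényi random graph G(n, 24δ/k) is (k/64)-expanding with probability at least 1 − n^{−c}; that is, with probability at least 1 − n^{−c}, every two disjoint subsets of vertices of size k/64 each are connected by at least one edge. -/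
open Real MeasureTheory
open scoped ENNReal NNReal

namespace Paper

variable {V : Type*}

/-- The simple graph on `Fin n` determined by edge indicators `ω`. -/
def graphOf {n : ℕ} (ω : Sym2 (Fin n) → Bool) : SimpleGraph (Fin n) where
  Adj u v := u ≠ v ∧ ω s(u, v) = true
  symm := ⟨fun u v h => ⟨h.1.symm, by rw [Sym2.eq_swap]; exact h.2⟩⟩
  loopless := ⟨fun u h => h.1 rfl⟩

/-- The law of the Erdős–Rényi random graph `G(n, p)`, realized as the product of
Bernoulli(`p`) measures over the potential edges. -/
noncomputable def erdosRenyi (n : ℕ) (p : ℝ≥0∞) (hp : p ≤ 1) :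
    Measure (Sym2 (Fin n) → Bool) :=
  Measure.pi fun _ => (PMF.ofFintype (fun b => cond b p (1 - p)) (by simp [add_tsub_cancel_of_le hp])).toMeasure

/-- `24·log₂ n`, the degree parameter `δ` of the paper. -/
noncomputable def dlt (n : ℕ) : ℝ := 24 * Real.logb 2 n

lemma dlt_nonneg (n : ℕ) : 0 ≤ dlt n := by
  rcases Nat.eq_zero_or_pos n with h | h
  · simp [dlt, h]
  · have : (1 : ℝ) ≤ n := by exact_mod_cast h
    have := Real.logb_nonneg (by norm_num : (1:ℝ) < 2) this
    unfold dlt; linarith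

/-- The edge probability `24·δ/k` is at most `1` when `25·δ ≤ k`. -/
lemma edgeProb_le_one {n k : ℕ} (hk : 25 * dlt n ≤ (k : ℝ)) :
    ENNReal.ofReal (24 * dlt n / k) ≤ 1 := by
  rw [ENNReal.ofReal_le_one]
  rcases eq_or_lt_of_le (dlt_nonneg n) with h | h
  · rw [← h]; norm_num
  · have hk0 : (0 : ℝ) < k := lt_of_lt_of_le (by linarith) hk
    rw [div_le_one hk0]; linarith
lemma measurableSet_all {n : ℕ} (s : Set (Sym2 (Fin n) → Bool)) : MeasurableSet s :=
  s.to_countable.measurableSet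

lemma meas_allFalse (n : ℕ) (p : ℝ≥0∞) (hp : p ≤ 1) (S : Finset (Sym2 (Fin n))) :
    erdosRenyi n p hp {ω | ∀ e ∈ S, ω e = false} = (1 - p) ^ S.card := by
  have hset : {ω : Sym2 (Fin n) → Bool | ∀ e ∈ S, ω e = false}
      = Set.pi Set.univ (fun e => if e ∈ S then ({false} : Set Bool) else Set.univ) := by
    ext ω
    simp only [Set.mem_setOf_eq, Set.mem_pi, Set.mem_univ, true_implies]
    constructor
    · intro h e
      by_cases he : e ∈ S <;> simp [he, h]
    · intro h e he
      have := h e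
      simpa [he] using this
  rw [erdosRenyi, hset, Measure.pi_pi]
  have hb : ∀ e : Sym2 (Fin n),
      (PMF.ofFintype (fun b => cond b p (1 - p)) (by simp [add_tsub_cancel_of_le hp])).toMeasure (if e ∈ S then ({false} : Set Bool) else Set.univ)
      = if e ∈ S then (1 - p) else 1 := by
    intro e
    by_cases he : e ∈ S <;> simp only [he, if_true, if_false]
    · rw [PMF.toMeasure_apply_singleton _ _ (measurableSet_singleton _), PMF.ofFintype_apply]
      rfl
    · exact measure_univ
  simp_rw [hb]
  rw [Finset.prod_ite_mem, Finset.univ_inter, Finset.prod_const]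

lemma meas_noEdge (n : ℕ) (p : ℝ≥0∞) (hp : p ≤ 1) (A B : Finset (Fin n)) (hd : Disjoint A B) :
    erdosRenyi n p hp {ω | ∀ a ∈ A, ∀ b ∈ B, ω s(a,b) = false}
      = (1 - p) ^ (A.card * B.card) := by
  classical
  set S : Finset (Sym2 (Fin n)) := (A ×ˢ B).image (fun ab => s(ab.1, ab.2)) with hS
  have hinj : Set.InjOn (fun ab : Fin n × Fin n => s(ab.1, ab.2)) (A ×ˢ B) := by
    rintro ⟨a₁, b₁⟩ h₁ ⟨a₂, b₂⟩ h₂ h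
    simp only [Finset.coe_product, Set.mem_prod, Finset.mem_coe] at h₁ h₂
    simp only [Sym2.eq, Sym2.rel_iff', Prod.mk.injEq, Prod.swap_prod_mk] at h
    rcases h with ⟨h1, h2⟩ | ⟨h1, h2⟩
    · simp [h1, h2]
    · exact absurd (h1 ▸ h₂.2) (Finset.disjoint_left.mp hd h₁.1)
  have hcard : S.card = A.card * B.card := by
    rw [hS, Finset.card_image_of_injOn (by rw [Finset.coe_product]; exact hinj), Finset.card_product]
  have hsets : {ω : Sym2 (Fin n) → Bool | ∀ a ∈ A, ∀ b ∈ B, ω s(a,b) = false}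
      = {ω | ∀ e ∈ S, ω e = false} := by
    ext ω
    simp only [Set.mem_setOf_eq, hS, Finset.mem_image, Finset.mem_product]
    constructor
    · rintro h e ⟨⟨a, b⟩, ⟨ha, hb⟩, rfl⟩
      exact h a ha b hb
    · intro h a ha b hb
      exact h _ ⟨⟨a, b⟩, ⟨ha, hb⟩, rfl⟩
  rw [hsets, meas_allFalse, hcard]
lemma real_bound {n k ℓ : ℕ} (hn : 2 ≤ n) (h25 : 25 * dlt n ≤ (k : ℝ)) (hℓ1 : 1 ≤ ℓ)
    (hℓ : (k : ℝ) / 64 ≤ (ℓ : ℝ)) :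
    (n : ℝ) ^ (2 * ℓ) * (1 - 24 * dlt n / k) ^ (ℓ * ℓ) ≤ ((n : ℝ))⁻¹ := by
  have hlog2 : (0 : ℝ) < Real.log 2 := Real.log_pos (by norm_num)
  have hn1 : (2 : ℝ) ≤ (n : ℝ) := by exact_mod_cast hn
  have hlogn : Real.log 2 ≤ Real.log n := Real.log_le_log (by norm_num) hn1
  have hx0 : (0 : ℝ) ≤ Real.log n := le_trans hlog2.le hlogn
  have hlb : 1 ≤ Real.logb 2 n := by
    rw [Real.logb, le_div_iff₀ hlog2]; linarith
  have hδ : 24 ≤ dlt n := by unfold dlt; linarith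
  have hk0 : (0 : ℝ) < k := by linarith
  set q : ℝ := 24 * dlt n / k with hq
  have hq0 : 0 ≤ q := by positivity
  have hq1 : q ≤ 1 := by rw [hq, div_le_one hk0]; linarith
  set L : ℝ := (ℓ : ℝ) with hL
  have hL1 : 1 ≤ L := by rw [hL]; exact_mod_cast hℓ1
  -- key: 12 log n ≤ q L
  have hkey : 12 * Real.log n ≤ q * L := by
    have h1 : q * ((k : ℝ) / 64) ≤ q * L := mul_le_mul_of_nonneg_left hℓ hq0
    have h2 : q * ((k : ℝ) / 64) = 3 * dlt n / 8 := by
      rw [hq]; field_simp; ring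
    have h3 : dlt n = 24 * (Real.log n / Real.log 2) := rfl
    have hlog2' : Real.log 2 ≤ 3 / 4 := by
      have := Real.log_two_lt_d9; linarith
    have h4 : 12 * Real.log n ≤ 3 * dlt n / 8 := by
      rw [h3, show 3 * (24 * (Real.log n / Real.log 2)) / 8
        = (9 * Real.log n) / Real.log 2 by ring, le_div_iff₀ hlog2]
      nlinarith
    linarith
  -- bound (1-q)^(ℓℓ) by exp
  have h1q : (0:ℝ) ≤ 1 - q := by linarith
  have hexp1 : (1 - q) ^ (ℓ * ℓ) ≤ Real.exp (-(q * (L * L))) := by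
    calc (1 - q) ^ (ℓ * ℓ) ≤ Real.exp (-q) ^ (ℓ * ℓ) := by
          apply pow_le_pow_left₀ h1q
          have := Real.add_one_le_exp (-q); linarith
      _ = Real.exp (-(q * (L * L))) := by
          rw [← Real.exp_nat_mul]
          congr 1
          push_cast [hL]
          ring
  have hnpow : (n : ℝ) ^ (2 * ℓ) = Real.exp (2 * L * Real.log n) := by
    rw [← Real.rpow_natCast (n:ℝ) (2*ℓ), Real.rpow_def_of_pos (by linarith : (0:ℝ) < (n:ℝ))]
    congr 1
    push_cast [hL]; ring
  have hninv : ((n : ℝ))⁻¹ = Real.exp (-(Real.log n)) := by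
    rw [Real.exp_neg, Real.exp_log (by linarith : (0:ℝ) < (n:ℝ))]
  calc (n : ℝ) ^ (2 * ℓ) * (1 - q) ^ (ℓ * ℓ)
      ≤ Real.exp (2 * L * Real.log n) * Real.exp (-(q * (L * L))) := by
        rw [hnpow]
        exact mul_le_mul_of_nonneg_left hexp1 (Real.exp_nonneg _)
    _ = Real.exp (2 * L * Real.log n - q * (L * L)) := by
        rw [← Real.exp_add]; ring_nf
    _ ≤ Real.exp (-(Real.log n)) := by
        apply Real.exp_le_exp.mpr
        nlinarith [mul_le_mul_of_nonneg_left hkey (by linarith : (0:ℝ) ≤ L)]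
    _ = ((n : ℝ))⁻¹ := hninv.symm
theorem stmt4 :
    ∃ c : ℝ, 0 < c ∧ ∃ N : ℕ, ∀ n : ℕ, N ≤ n → ∀ k : ℕ,
      ∀ h25 : 25 * dlt n ≤ (k : ℝ), (k : ℝ) ≤ 2 * n / 3 →
      1 - (n : ℝ≥0∞) ^ (-c) ≤
        erdosRenyi n (ENNReal.ofReal (24 * dlt n / k)) (edgeProb_le_one h25)
          {ω | Expanding (graphOf ω) ((k : ℝ) / 64)} := by
  classical
  refine ⟨1, one_pos, 2, fun n hn k h25 _hk23 => ?_⟩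
  set p : ℝ≥0∞ := ENNReal.ofReal (24 * dlt n / k) with hp
  set μ := erdosRenyi n p (edgeProb_le_one h25) with hμ
  haveI : IsProbabilityMeasure μ := by
    rw [hμ]; unfold erdosRenyi; infer_instance
  have hn1 : (2:ℝ) ≤ (n:ℝ) := by exact_mod_cast hn
  have hlog2 : (0:ℝ) < Real.log 2 := Real.log_pos (by norm_num)
  have hlb : 1 ≤ Real.logb 2 n := by
    rw [Real.logb, le_div_iff₀ hlog2]
    have := Real.log_le_log (by norm_num : (0:ℝ) < 2) hn1; linarith
  have hδ : 24 ≤ dlt n := by unfold dlt; linarith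
  have hk0 : (0:ℝ) < k := by linarith
  have hq0 : (0:ℝ) ≤ 24 * dlt n / k := by positivity
  have hq1 : 24 * dlt n / k ≤ 1 := by rw [div_le_one hk0]; linarith
  set ℓ : ℕ := ⌈(k:ℝ)/64⌉₊ with hℓdef
  have hℓlb : (k:ℝ)/64 ≤ (ℓ:ℝ) := Nat.le_ceil _
  have hℓ1 : 1 ≤ ℓ := Nat.ceil_pos.mpr (div_pos hk0 (by norm_num))
  set P : Finset (Finset (Fin n)) := Finset.powersetCard ℓ Finset.univ with hP
  set D := (P ×ˢ P).filter (fun ab => Disjoint ab.1 ab.2) with hD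
  set E : Finset (Fin n) × Finset (Fin n) → Set (Sym2 (Fin n) → Bool) :=
    fun ab => {ω | ∀ a ∈ ab.1, ∀ b ∈ ab.2, ω s(a,b) = false} with hE
  have hsub : {ω | Expanding (graphOf ω) ((k:ℝ)/64)}ᶜ ⊆ ⋃ ab ∈ D, E ab := by
    intro ω hω
    simp only [Set.mem_compl_iff, Set.mem_setOf_eq, Expanding] at hω
    push_neg at hω
    obtain ⟨A, B, hAB, hA, hB, hnoe⟩ := hω
    have hℓA : ℓ ≤ A.ncard := Nat.ceil_le.mpr hA
    have hℓB : ℓ ≤ B.ncard := Nat.ceil_le.mpr hB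
    obtain ⟨A', hA'sub, hA'card⟩ := Set.exists_subset_card_eq hℓA
    obtain ⟨B', hB'sub, hB'card⟩ := Set.exists_subset_card_eq hℓB
    have hA'fin : A'.Finite := Set.toFinite _
    have hB'fin : B'.Finite := Set.toFinite _
    have hmemD : (hA'fin.toFinset, hB'fin.toFinset) ∈ D := by
      rw [hD, Finset.mem_filter, Finset.mem_product]
      refine ⟨⟨?_, ?_⟩, ?_⟩
      · rw [hP, Finset.mem_powersetCard]
        refine ⟨Finset.subset_univ _, ?_⟩
        show hA'fin.toFinset.card = ℓ
        rw [← Set.ncard_eq_toFinset_card _ hA'fin]; exact hA'card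
      · rw [hP, Finset.mem_powersetCard]
        refine ⟨Finset.subset_univ _, ?_⟩
        show hB'fin.toFinset.card = ℓ
        rw [← Set.ncard_eq_toFinset_card _ hB'fin]; exact hB'card
      · rw [Set.Finite.disjoint_toFinset]
        exact hAB.mono hA'sub hB'sub
    refine Set.mem_biUnion hmemD ?_
    rw [hE]
    intro a ha b hb
    rw [Set.Finite.mem_toFinset] at ha hb
    have haA : a ∈ A := hA'sub ha
    have hbB : b ∈ B := hB'sub hb
    have hne : a ≠ b := fun h => (hAB.ne_of_mem haA hbB) h
    have := hnoe a haA b hbB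
    simp only [graphOf, hne, ne_eq, not_false_iff, true_and] at this
    exact Bool.not_eq_true _ ▸ (by simpa using this)
  have hmeasE : ∀ ab ∈ D, μ (E ab) = (1 - p) ^ (ℓ * ℓ) := by
    intro ab hab
    rw [hD, Finset.mem_filter, Finset.mem_product] at hab
    obtain ⟨⟨h1, h2⟩, h3⟩ := hab
    rw [hP, Finset.mem_powersetCard] at h1 h2
    rw [hμ, hE]
    rw [meas_noEdge n p _ ab.1 ab.2 h3, h1.2, h2.2]
  have hDcard : D.card ≤ n ^ ℓ * n ^ ℓ := by
    calc D.card ≤ (P ×ˢ P).card := Finset.card_filter_le _ _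
      _ = P.card * P.card := Finset.card_product _ _
      _ ≤ n ^ ℓ * n ^ ℓ := by
          have : P.card = n.choose ℓ := by
            rw [hP, Finset.card_powersetCard, Finset.card_univ, Fintype.card_fin]
          rw [this]
          exact Nat.mul_le_mul (Nat.choose_le_pow n ℓ) (Nat.choose_le_pow n ℓ)
  have h1p : (1 : ℝ≥0∞) - p = ENNReal.ofReal (1 - 24 * dlt n / k) := by
    rw [hp, ENNReal.ofReal_sub _ hq0, ENNReal.ofReal_one]
  have hfail : μ ({ω | Expanding (graphOf ω) ((k:ℝ)/64)}ᶜ) ≤ (n:ℝ≥0∞) ^ (-(1:ℝ)) := by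
    calc μ ({ω | Expanding (graphOf ω) ((k:ℝ)/64)}ᶜ)
        ≤ ∑ ab ∈ D, μ (E ab) := (measure_mono hsub).trans (measure_biUnion_finset_le D E)
      _ = (D.card : ℝ≥0∞) * (1 - p) ^ (ℓ * ℓ) := by
          rw [Finset.sum_congr rfl hmeasE, Finset.sum_const, nsmul_eq_mul]
      _ ≤ ((n ^ ℓ * n ^ ℓ : ℕ) : ℝ≥0∞) * (1 - p) ^ (ℓ * ℓ) := by
          exact mul_le_mul_left (by exact_mod_cast hDcard) _
      _ = ENNReal.ofReal ((n:ℝ) ^ (2 * ℓ) * (1 - 24 * dlt n / k) ^ (ℓ * ℓ)) := by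
          rw [h1p, ← ENNReal.ofReal_pow (by linarith), ← ENNReal.ofReal_natCast,
            ← ENNReal.ofReal_mul (by positivity)]
          congr 2
          push_cast
          rw [two_mul, pow_add]
      _ ≤ ENNReal.ofReal (((n:ℝ))⁻¹) := by
          exact ENNReal.ofReal_le_ofReal (real_bound hn h25 hℓ1 hℓlb)
      _ = (n:ℝ≥0∞) ^ (-(1:ℝ)) := by
          rw [ENNReal.rpow_neg_one, ← ENNReal.ofReal_natCast,
            ENNReal.ofReal_inv_of_pos (by linarith)]
  have hmeas := measurableSet_all ({ω | Expanding (graphOf ω) ((k:ℝ)/64)} : Set (Sym2 (Fin n) → Bool))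
  have hs : μ {ω | Expanding (graphOf ω) ((k:ℝ)/64)}
      = 1 - μ ({ω | Expanding (graphOf ω) ((k:ℝ)/64)}ᶜ) := by
    rw [prob_compl_eq_one_sub hmeas,
      ENNReal.sub_sub_cancel ENNReal.one_ne_top prob_le_one]
  rw [hs]
  exact tsub_le_tsub_left hfail 1

end Paper
end
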